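/- For all y > 0 and x > 1, we have [Γ(x+y+1)/Γ(y+1)]^{1/x} / [Γ(x+y+2)/Γ(y+1)]^{1/(x+1)} < sqrt((x+y)/(x+y+1)). -/

import Mathlib

/-!
After taking logarithms the inequality says, with `u = y + 1`, that the defect
`D(u) = x log (u + x) - (x² + x)/2 · log ((u + x)/(u + x - 1)) - log (Γ(u + x)/Γ(u))`
is positive. By `Γ(v + 1) = v Γ(v)`, `D(u) - D(u + 1) = C(u)` is an explicit combination of
logarithms with derivative `x (1 - x²) / (u (u + x) (u + x - 1) (u + x + 1)) < 0` and limit `0`,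
so `C > 0` and `n ↦ D(u + n)` decreases. Comparing slopes of the convex function `log ∘ Γ` on
`[u, u + x]` and `[u + x, u + x + 1]` bounds `D(u + n)` below by a quantity tending to `0`.
Hence `D ≥ 0`, and `D(u) = D(u + 1) + C(u) > 0`.
-/

open Real Filter Topology

noncomputable def gammaDefect (x u : ℝ) : ℝ :=
  x * log (u + x) - (x ^ 2 + x) / 2 * (log (u + x) - log (u + x - 1)) -
    (log (Gamma (u + x)) - log (Gamma u))

noncomputable def gammaDefectStep (x u : ℝ) : ℝ :=
  (log (u + x) - log u) - x * (log (u + x + 1) - log (u + x)) +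
    (x ^ 2 + x) / 2 * (log (u + x + 1) - 2 * log (u + x) + log (u + x - 1))

lemma tendsto_log_add_sub_log_add (a b : ℝ) :
    Tendsto (fun v => log (v + a) - log (v + b)) atTop (𝓝 0) := by
  simpa using (tendsto_log_comp_add_sub_log a).sub (tendsto_log_comp_add_sub_log b)

lemma tendsto_gammaDefectStep_atTop (x : ℝ) : Tendsto (gammaDefectStep x) atTop (𝓝 0) := by
  have h := ((tendsto_log_add_sub_log_add x 0).sub
    ((tendsto_log_add_sub_log_add (x + 1) x).const_mul x)).add
    (((tendsto_log_add_sub_log_add (x + 1) x).sub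
      (tendsto_log_add_sub_log_add x (x - 1))).const_mul ((x ^ 2 + x) / 2))
  simp only [sub_self, mul_zero, add_zero] at h
  refine h.congr fun u => ?_
  simp only [gammaDefectStep, ← add_assoc, ← add_sub_assoc]
  ring

lemma hasDerivAt_gammaDefectStep {x u : ℝ} (hu : 0 < u) (hux : 0 < u + x - 1) :
    HasDerivAt (gammaDefectStep x)
      (x * (1 - x ^ 2) / (u * (u + x) * (u + x - 1) * (u + x + 1))) u := by
  have hlog : ∀ c, 0 < u + c → HasDerivAt (fun v => log (v + c)) (1 / (u + c)) u :=
    fun c hc => by simpa using ((hasDerivAt_id u).add_const c).log hc.ne'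
  have h0 := hlog 0 (by simpa using hu)
  have h1 := hlog x (by linarith)
  have h2 := hlog (x + 1) (by linarith)
  have h3 := hlog (x - 1) (by linarith)
  simp only [add_zero, ← add_assoc, ← add_sub_assoc] at h0 h1 h2 h3
  refine (((h1.sub h0).sub ((h2.sub h1).const_mul x)).add
    (((h2.sub (h1.const_mul 2)).add h3).const_mul ((x ^ 2 + x) / 2))).congr_deriv ?_
  have : u + x ≠ 0 := by linarith
  have : u + x + 1 ≠ 0 := by linarith
  field_simp
  ring

lemma gammaDefectStep_strictAntiOn {x : ℝ} (hx : 1 < x) :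
    StrictAntiOn (gammaDefectStep x) (Set.Ioi 0) := by
  refine strictAntiOn_of_deriv_neg (convex_Ioi 0)
    (fun u hu => (hasDerivAt_gammaDefectStep hu (by linarith [hu.out])).continuousAt
      |>.continuousWithinAt) fun u hu => ?_
  rw [interior_Ioi] at hu
  have hux : 0 < u + x - 1 := by linarith [hu.out]
  rw [(hasDerivAt_gammaDefectStep hu hux).deriv]
  exact div_neg_of_neg_of_pos (by nlinarith) (by have := hu.out; positivity)

lemma gammaDefectStep_pos {x u : ℝ} (hx : 1 < x) (hu : 0 < u) : 0 < gammaDefectStep x u := by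
  have hanti := gammaDefectStep_strictAntiOn hx
  have hnext : 0 ≤ gammaDefectStep x (u + 1) :=
    le_of_tendsto (tendsto_gammaDefectStep_atTop x) <| by
      filter_upwards [eventually_ge_atTop (u + 1)] with v hv
      exact hanti.antitoneOn (Set.mem_Ioi.mpr (by linarith)) (Set.mem_Ioi.mpr (by linarith)) hv
  linarith [hanti (Set.mem_Ioi.mpr hu) (Set.mem_Ioi.mpr (by linarith)) (lt_add_one u)]

lemma gammaDefect_eq_add_one_add_step {x u : ℝ} (hu : 0 < u) (hux : 0 < u + x) :
    gammaDefect x u = gammaDefect x (u + 1) + gammaDefectStep x u := by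
  have hlogΓ : ∀ {v : ℝ}, 0 < v → log (Gamma (v + 1)) = log v + log (Gamma v) := fun hv => by
    rw [Gamma_add_one hv.ne', log_mul hv.ne' (Gamma_pos_of_pos hv).ne']
  rw [gammaDefect, gammaDefect, gammaDefectStep, show u + 1 + x = u + x + 1 by ring,
    hlogΓ hu, hlogΓ hux, add_sub_cancel_right]
  ring

lemma neg_le_gammaDefect {x u : ℝ} (hx : 0 < x) (hu : 0 < u) :
    -((x ^ 2 + x) / 2 * (log (u + x) - log (u + x - 1))) ≤ gammaDefect x u := by
  have hslope := convexOn_log_Gamma.slope_mono_adjacent (Set.mem_Ioi.mpr hu)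
    (Set.mem_Ioi.mpr (by linarith)) (lt_add_of_pos_right u hx) (lt_add_one _)
  simp only [Function.comp_apply, add_sub_cancel_left, div_one,
    Gamma_add_one (show u + x ≠ 0 by linarith),
    log_mul (show u + x ≠ 0 by linarith) (Gamma_pos_of_pos (show 0 < u + x by linarith)).ne',
    add_sub_cancel_right, div_le_iff₀ hx] at hslope
  rw [gammaDefect]
  linarith

lemma gammaDefect_add_nat_le {x u : ℝ} (hx : 1 < x) (hu : 0 < u) (n : ℕ) :
    gammaDefect x (u + n) ≤ gammaDefect x u := by
  induction n with
  | zero => simp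
  | succ n ih =>
    have hun : 0 < u + n := by positivity
    have hstep := gammaDefect_eq_add_one_add_step (x := x) hun (by linarith)
    have := gammaDefectStep_pos hx hun
    push_cast
    rw [← add_assoc]
    linarith

lemma gammaDefect_nonneg {x u : ℝ} (hx : 1 < x) (hu : 0 < u) : 0 ≤ gammaDefect x u := by
  have hbound : Tendsto (fun v => -((x ^ 2 + x) / 2 * (log (v + x) - log (v + x - 1))))
      atTop (𝓝 0) := by
    simpa [add_sub_assoc] using ((tendsto_log_add_sub_log_add x (x - 1)).const_mul
      ((x ^ 2 + x) / 2)).neg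
  refine le_of_tendsto
    (hbound.comp (tendsto_atTop_add_const_left _ u tendsto_natCast_atTop_atTop))
    (Eventually.of_forall fun n => ?_)
  exact (neg_le_gammaDefect (by linarith) (by positivity)).trans
    (gammaDefect_add_nat_le hx hu n)

lemma gammaDefect_pos {x u : ℝ} (hx : 1 < x) (hu : 0 < u) : 0 < gammaDefect x u := by
  rw [gammaDefect_eq_add_one_add_step hu (by linarith)]
  exact add_pos_of_nonneg_of_pos (gammaDefect_nonneg hx (by linarith)) (gammaDefectStep_pos hx hu)

theorem stmt_0 (x y : ℝ) (hy : 0 < y) (hx : 1 < x) :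
    (Real.Gamma (x + y + 1) / Real.Gamma (y + 1)) ^ (1 / x) /
      (Real.Gamma (x + y + 2) / Real.Gamma (y + 1)) ^ (1 / (x + 1)) <
    Real.sqrt ((x + y) / (x + y + 1)) := by
  have hu : 0 < y + 1 := by linarith
  have hs : 0 < x + y + 1 := by linarith
  have hxy : 0 < x + y := by linarith
  have hD := gammaDefect_pos hx hu
  rw [gammaDefect, show y + 1 + x = x + y + 1 by ring, add_sub_cancel_right] at hD
  have hΓu := Gamma_pos_of_pos hu
  have hΓs := Gamma_pos_of_pos hs
  have hratio : 0 < Gamma (x + y + 1) / Gamma (y + 1) := div_pos hΓs hΓu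
  rw [show x + y + 2 = x + y + 1 + 1 by ring, Gamma_add_one hs.ne', mul_div_assoc,
    ← log_lt_log_iff (div_pos (rpow_pos_of_pos hratio _) (rpow_pos_of_pos (by positivity) _))
      (sqrt_pos.mpr (by positivity)),
    log_div (rpow_pos_of_pos hratio _).ne' (rpow_pos_of_pos (by positivity) _).ne',
    log_rpow hratio, log_rpow (by positivity), log_mul hs.ne' hratio.ne',
    log_div hΓs.ne' hΓu.ne', log_sqrt (by positivity), log_div hxy.ne' hs.ne', ← sub_neg]
  have hx0 : x ≠ 0 := by linarith
  have hx1 : x + 1 ≠ 0 := by linarith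
  refine (le_of_eq ?_).trans_lt (neg_neg_of_pos (div_pos hD (by positivity : 0 < x * (x + 1))))
  field_simp
  ring
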